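/- Let n ≥ 2 be an integer, d = n² + 3, and let D be the squarefree part of (d+1)(d−3). Then D is congruent to 1, 2, or 5 modulo 8, and moreover: D ≡ 1 (mod 8) if and only if n ≡ 0 (mod 8); D ≡ 2 (mod 8) if and only if n ≡ 2 (mod 4); and D ≡ 5 (mod 8) if and only if n is odd or n ≡ 4 (mod 8). -/

import Mathlib

/-!
Since `(d + 1)(d - 3) = n²(n² + 4)`, write it as `c² b` with `b` odd (or as `c² · 2b`), by
pulling out the factors of `2` that come in squares. A squarefree `D` with `f² D = c² b`
cannot absorb a factor `4`, so the powers of `2` in `c²` are all matched by `f²`; after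
cancelling them, both sides differ by an odd square, and odd squares are `1 (mod 8)`.
Hence `D ≡ b` (resp. `D ≡ 2b`) modulo `8`, and `b (mod 8)` is read off from `n`.
-/

namespace Nat

theorem sq_modEq_one_of_odd {a : ℕ} (ha : Odd a) : a ^ 2 ≡ 1 [MOD 8] := by
  have ha' : a % 8 = 1 ∨ a % 8 = 3 ∨ a % 8 = 5 ∨ a % 8 = 7 := by
    have := Nat.odd_iff.mp ha
    omega
  change a ^ 2 % 8 = 1
  rw [Nat.pow_mod]
  rcases ha' with h | h | h | h <;> rw [h]

theorem modEq_eight_of_sq_mul_eq {f D b : ℕ} (hb : Odd b) (h : f ^ 2 * D = b) :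
    D ≡ b [MOD 8] := by
  have hf : Odd f := Nat.Odd.of_mul_left (n := f * D) (by rwa [← mul_assoc, ← sq, h])
  calc D = 1 * D := (one_mul D).symm
    _ ≡ f ^ 2 * D [MOD 8] := ((sq_modEq_one_of_odd hf).symm.mul_right D)
    _ = b := h

theorem modEq_eight_of_sq_mul_eq_two_mul {f D b : ℕ} (hb : Odd b) (h : f ^ 2 * D = 2 * b) :
    D ≡ 2 * b [MOD 8] := by
  have hf : Odd f := by
    rcases Nat.even_or_odd f with ⟨g, rfl⟩ | hf
    · have : 4 * (g ^ 2 * D) = 2 * b := by rw [← h]; ring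
      have := Nat.odd_iff.mp hb
      omega
    · exact hf
  obtain ⟨u, rfl⟩ : 2 ∣ D :=
    (Nat.Coprime.pow_right 2 (Nat.coprime_two_left.mpr hf)).dvd_of_dvd_mul_left ⟨b, h⟩
  have hu : f ^ 2 * u = b := by
    rw [← Nat.mul_left_cancel_iff two_pos, ← h]
    ring
  exact (modEq_eight_of_sq_mul_eq hb hu).mul_left 2

end Nat

namespace Squarefree

theorem exists_sq_mul_eq_of_sq_mul_eq_four_mul {f D C : ℕ} (hD : Squarefree D)
    (h : f ^ 2 * D = 4 * C) : ∃ g, g ^ 2 * D = C := by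
  obtain ⟨g, rfl⟩ : Even f := by
    by_contra hf
    have h4 : 2 * 2 ∣ D := (Nat.Coprime.pow 2 2
      (Nat.coprime_two_left.mpr (Nat.not_even_iff_odd.mp hf))).dvd_of_dvd_mul_left ⟨C, h⟩
    exact absurd (hD 2 h4) (by decide)
  refine ⟨g, Nat.eq_of_mul_eq_mul_left four_pos ?_⟩
  rw [← h]
  ring

theorem exists_sq_mul_eq_of_sq_mul_eq_four_pow_mul {f D C e : ℕ} (hD : Squarefree D)
    (h : f ^ 2 * D = 4 ^ e * C) : ∃ g, g ^ 2 * D = C := by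
  induction e generalizing f C with
  | zero => exact ⟨f, by simpa using h⟩
  | succ e ih =>
    obtain ⟨g, hg⟩ := hD.exists_sq_mul_eq_of_sq_mul_eq_four_mul (C := 4 ^ e * C)
      (by rw [h]; ring)
    exact ih hg

theorem exists_sq_mul_eq_odd_sq_mul {f D c b : ℕ} (hD : Squarefree D) (hc : c ≠ 0)
    (h : f ^ 2 * D = c ^ 2 * b) : ∃ g j, Odd j ∧ g ^ 2 * D = j ^ 2 * b := by
  obtain ⟨a, j, hj, rfl⟩ := Nat.exists_eq_two_pow_mul_odd hc
  obtain ⟨g, hg⟩ := hD.exists_sq_mul_eq_of_sq_mul_eq_four_pow_mul (C := j ^ 2 * b)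
    (by rw [h, mul_pow, ← pow_mul, mul_comm a 2, pow_mul]; ring)
  exact ⟨g, j, hj, hg⟩

theorem modEq_eight_of_sq_mul_eq_sq_mul {f D c b : ℕ} (hD : Squarefree D) (hc : c ≠ 0)
    (hb : Odd b) (h : f ^ 2 * D = c ^ 2 * b) : D ≡ b [MOD 8] := by
  obtain ⟨g, j, hj, hg⟩ := hD.exists_sq_mul_eq_odd_sq_mul hc h
  calc D ≡ j ^ 2 * b [MOD 8] := Nat.modEq_eight_of_sq_mul_eq (hj.pow.mul hb) hg
    _ ≡ 1 * b [MOD 8] := (Nat.sq_modEq_one_of_odd hj).mul_right b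
    _ = b := one_mul b

theorem modEq_eight_of_sq_mul_eq_sq_mul_two_mul {f D c b : ℕ} (hD : Squarefree D) (hc : c ≠ 0)
    (hb : Odd b) (h : f ^ 2 * D = c ^ 2 * (2 * b)) : D ≡ 2 * b [MOD 8] := by
  obtain ⟨g, j, hj, hg⟩ := hD.exists_sq_mul_eq_odd_sq_mul hc h
  calc D ≡ 2 * (j ^ 2 * b) [MOD 8] :=
        Nat.modEq_eight_of_sq_mul_eq_two_mul (hj.pow.mul hb) (by rw [hg]; ring)
    _ ≡ 2 * (1 * b) [MOD 8] := ((Nat.sq_modEq_one_of_odd hj).mul_right b).mul_left 2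
    _ = 2 * b := by rw [one_mul]

end Squarefree

section SqMulSqAddFour

variable {n f D : ℕ} (hD : Squarefree D) (h : f ^ 2 * D = n ^ 2 * (n ^ 2 + 4))
include hD h

theorem squarefreePart_sq_mul_sq_add_four_mod_eight_of_odd (hn : Odd n) : D % 8 = 5 := by
  have hD8 : D ≡ n ^ 2 + 4 [MOD 8] :=
    hD.modEq_eight_of_sq_mul_eq_sq_mul hn.pos.ne' (hn.pow.add_even (by decide)) h
  have : _ % 8 = 1 := Nat.sq_modEq_one_of_odd hn
  unfold Nat.ModEq at hD8
  omega

theorem squarefreePart_sq_mul_sq_add_four_mod_eight_of_mod_four_eq_two (hn : n % 4 = 2) :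
    D % 8 = 2 := by
  obtain ⟨k, rfl, hk⟩ : ∃ k, n = 2 * k ∧ Odd k :=
    ⟨n / 2, by omega, Nat.odd_iff.mpr (by omega)⟩
  obtain ⟨t, ht⟩ : ∃ t, k ^ 2 = 8 * t + 1 :=
    ⟨k ^ 2 / 8, by have : _ % 8 = 1 := Nat.sq_modEq_one_of_odd hk; omega⟩
  have hD8 : D ≡ 2 * (4 * t + 1) [MOD 8] :=
    hD.modEq_eight_of_sq_mul_eq_sq_mul_two_mul (c := 4 * k) (by have := hk.pos; omega)
      ⟨2 * t, by ring⟩ (by rw [h, mul_pow, mul_pow, ht]; ring)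
  unfold Nat.ModEq at hD8
  omega

theorem squarefreePart_sq_mul_sq_add_four_mod_eight_of_mod_eight_eq_four (hn : n % 8 = 4) :
    D % 8 = 5 := by
  obtain ⟨l, rfl, hl⟩ : ∃ l, n = 4 * l ∧ Odd l :=
    ⟨n / 4, by omega, Nat.odd_iff.mpr (by omega)⟩
  have hD8 : D ≡ 4 * l ^ 2 + 1 [MOD 8] :=
    hD.modEq_eight_of_sq_mul_eq_sq_mul (c := 8 * l) (by have := hl.pos; omega)
      ⟨2 * l ^ 2, by ring⟩ (by rw [h]; ring)
  have : _ % 8 = 1 := Nat.sq_modEq_one_of_odd hl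
  unfold Nat.ModEq at hD8
  omega

theorem squarefreePart_sq_mul_sq_add_four_mod_eight_of_mod_eight_eq_zero (hn₀ : n ≠ 0)
    (hn : n % 8 = 0) : D % 8 = 1 := by
  obtain ⟨l, rfl⟩ : ∃ l, n = 8 * l := ⟨n / 8, by omega⟩
  have hD8 : D ≡ 16 * l ^ 2 + 1 [MOD 8] :=
    hD.modEq_eight_of_sq_mul_eq_sq_mul (c := 16 * l) (by omega) ⟨8 * l ^ 2, by ring⟩
      (by rw [h]; ring)
  unfold Nat.ModEq at hD8
  omega

end SqMulSqAddFour

theorem stmt_5 (n d D f : ℕ) (hn : 2 ≤ n) (hd : d = n ^ 2 + 3)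
    (hDsf : Squarefree D) (hfac : (d + 1) * (d - 3) = f ^ 2 * D) :
    (D % 8 = 1 ∨ D % 8 = 2 ∨ D % 8 = 5) ∧
    (D % 8 = 1 ↔ n % 8 = 0) ∧
    (D % 8 = 2 ↔ n % 4 = 2) ∧
    (D % 8 = 5 ↔ (n % 2 = 1 ∨ n % 8 = 4)) := by
  subst hd
  have h : f ^ 2 * D = n ^ 2 * (n ^ 2 + 4) := by rw [← hfac, Nat.add_sub_cancel]; ring
  have h₁ : n % 2 = 1 → D % 8 = 5 :=
    fun hn' => squarefreePart_sq_mul_sq_add_four_mod_eight_of_odd hDsf h (Nat.odd_iff.mpr hn')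
  have h₂ := squarefreePart_sq_mul_sq_add_four_mod_eight_of_mod_four_eq_two hDsf h
  have h₃ := squarefreePart_sq_mul_sq_add_four_mod_eight_of_mod_eight_eq_four hDsf h
  have h₄ := squarefreePart_sq_mul_sq_add_four_mod_eight_of_mod_eight_eq_zero hDsf h (by omega)
  omega
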